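/- arXiv:1807.11505 — 4 statements merged into one kernel-verified Lean document; each statement's English description precedes it below -/
import Mathlib

section
/- Every self-modified ascent sequence is a restricted growth function. That is, if a = (a_1, ..., a_n) is a sequence of non-negative integers with a_1 = 0 such that for all k > 1, a_k ∈ [0, a_{k-1}] ∪ {1 + asc(a_1,...,a_{k-1})}, then a is a restricted growth function. -/
def ascents (l : List ℕ) : ℕ :=
  ((l.zip l.tail).filter (fun p => p.1 < p.2)).length

def IsAscSeq (l : List ℕ) : Prop :=
  l.getD 0 0 = 0 ∧
  ∀ k, k < l.length → 0 < k → l.getD k 0 ≤ ascents (l.take k) + 1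

def IsRGF (l : List ℕ) : Prop :=
  l.getD 0 0 = 0 ∧
  ∀ k, k < l.length → ∀ j, l.getD k 0 = j + 1 → ∃ i, i < k ∧ l.getD i 0 = j

def SelfModified (l : List ℕ) : Prop :=
  IsAscSeq l ∧
  ∀ k, k < l.length → 0 < k →
    l.getD k 0 ≤ l.getD (k - 1) 0 ∨ l.getD k 0 = ascents (l.take k) + 1

def Contains101 (l : List ℕ) : Prop :=
  ∃ i j k, i < j ∧ j < k ∧ k < l.length ∧
    l.getD i 0 = l.getD k 0 ∧ l.getD j 0 < l.getD k 0

def Contains0101 (l : List ℕ) : Prop :=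
  ∃ i j k m, i < j ∧ j < k ∧ k < m ∧ m < l.length ∧
    l.getD i 0 = l.getD k 0 ∧ l.getD j 0 = l.getD m 0 ∧ l.getD i 0 < l.getD j 0

def Contains1010 (l : List ℕ) : Prop :=
  ∃ i j k m, i < j ∧ j < k ∧ k < m ∧ m < l.length ∧
    l.getD i 0 = l.getD k 0 ∧ l.getD j 0 = l.getD m 0 ∧ l.getD j 0 < l.getD i 0

/-- The view of position `i` in the sequence `a`: the number of indices `j > i` such
that `a j` strictly exceeds all entries `a k` for `i ≤ k < j`.  This agrees with the
recursive definition `v i = v j + 1` for `j` the least index `> i` with `a j > a i`. -/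
def view {α : Type*} [LinearOrder α] [Inhabited α] (a : List α) (i : ℕ) : ℕ :=
  ((List.range a.length).filter (fun j =>
    decide (i < j ∧ ∀ k, k < j → i ≤ k → a.getD k default < a.getD j default))).length

/-- The panorama of `a`: the views of the positions of `a`, listed grouped by entry
value from largest value to smallest, positions within a group in increasing order. -/
def pan {α : Type*} [LinearOrder α] [Inhabited α] (a : List α) : List ℕ :=
  ((List.range a.length).mergeSort (fun i j =>
    decide (a.getD j default < a.getD i default ∨
      (a.getD i default = a.getD j default ∧ i ≤ j)))).map (view a)

/-- A square matrix of natural numbers, given by a dimension and an entry function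
(indices are 0-based; entries with an index `≥ d` are irrelevant/zero). -/
structure FMat where
  d : ℕ
  entry : ℕ → ℕ → ℕ

/-- 0-based index of the first row whose rightmost entry is nonzero. -/
noncomputable def mindex (M : FMat) : ℕ :=
  sInf {i | M.entry i (M.d - 1) ≠ 0}

/-- One step of the recursive bijection from ascent sequences to Fishburn matrices,
with cases AM1, AM2, AM3 (0-based indices). -/
noncomputable def fStep (M : FMat) (a : ℕ) : FMat :=
  if a ≤ mindex M then
    -- AM1: increase entry (a, d-1)
    ⟨M.d, fun i j => M.entry i j + if i = a ∧ j = M.d - 1 then 1 else 0⟩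
  else if a = M.d then
    -- AM2: append a new row and column, with 1 in the new diagonal entry
    ⟨M.d + 1, fun i j =>
      if i = M.d ∨ j = M.d then (if i = M.d ∧ j = M.d then 1 else 0)
      else M.entry i j⟩
  else
    -- AM3: insert a new row and column at index a
    ⟨M.d + 1, fun i j =>
      if i = a then (if j = M.d then 1 else 0)
      else if j = a then (if i < a then M.entry i (M.d - 1) else 0)
      else if j = M.d ∧ i < a then 0
      else M.entry (if i < a then i else i - 1) (if j < a then j else j - 1)⟩

/-- The map from ascent sequences to Fishburn matrices. -/
noncomputable def fAM (l : List ℕ) : FMat :=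
  l.tail.foldl fStep ⟨1, fun i j => if i = 0 ∧ j = 0 then 1 else 0⟩

/-- Fishburn matrix: upper triangular (and supported on `[0,d) × [0,d)`),
with no zero row and no zero column. -/
def IsFishburn (M : FMat) : Prop :=
  (∀ i j, (M.d ≤ i ∨ M.d ≤ j ∨ j < i) → M.entry i j = 0) ∧
  (∀ i, i < M.d → ∃ j, j < M.d ∧ M.entry i j ≠ 0) ∧
  (∀ j, j < M.d → ∃ i, i < M.d ∧ M.entry i j ≠ 0)

def entrySum (M : FMat) : ℕ :=
  ∑ i ∈ Finset.range M.d, ∑ j ∈ Finset.range M.d, M.entry i j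

/-- Reflection of a matrix through its antidiagonal. -/
def reflect (M : FMat) : FMat :=
  ⟨M.d, fun i j => if i < M.d ∧ j < M.d then M.entry (M.d - 1 - j) (M.d - 1 - i) else 0⟩

/-- The canonical sequence `(0^{m₀₀}, 1^{m₁₁}, 0^{m₀₁}, 2^{m₂₂}, 1^{m₁₂}, 0^{m₀₂}, …)`
(0-based indices) associated to a matrix; this is `f_MA(M)` for `M ∈ RMatrices`. -/
def canonSeq (M : FMat) : List ℕ :=
  (List.range M.d).flatMap (fun j =>
    (List.range (j + 1)).reverse.flatMap (fun i => List.replicate (M.entry i j) i))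

/-- The dual canonical sequence
`(0^{m_{d-1,d-1}}, 1^{m_{d-2,d-2}}, 0^{m_{d-2,d-1}}, …, (d-1)^{m_{0,0}}, …, 0^{m_{0,d-1}})`,
i.e. `f_MA` applied to the antidiagonal reflection of `M`. -/
def dualCanonSeq (M : FMat) : List ℕ :=
  (List.range M.d).flatMap (fun j =>
    (List.range (j + 1)).reverse.flatMap (fun i =>
      List.replicate (M.entry (M.d - 1 - j) (M.d - 1 - i)) i))

/-- A matrix is SE-free if it has no pair of nonzero entries `m i j`, `m i' j'`
with `i < i'`, `j < j'` and `i' ≤ j`. -/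
def SEFree (M : FMat) : Prop :=
  ¬ ∃ i j i' j', i < i' ∧ j < j' ∧ i' ≤ j ∧ j' < M.d ∧
    M.entry i j ≠ 0 ∧ M.entry i' j' ≠ 0

/-- Generalized ballot sequence (Yamanouchi word): in every prefix, each value `j+1`
occurs at most as often as `j`. -/
def IsBallot (l : List ℕ) : Prop :=
  ∀ k j, (l.take k).count (j + 1) ≤ (l.take k).count j

lemma ascents_cons₂ (a b : ℕ) (t : List ℕ) :
    ascents (a :: b :: t) = (if a < b then 1 else 0) + ascents (b :: t) := by
  simp only [ascents, List.tail_cons, List.zip_cons_cons, List.filter_cons]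
  by_cases hab : a < b <;> simp [hab] <;> omega

lemma ascents_append (xs : List ℕ) (y : ℕ) (hx : xs ≠ []) :
    ascents (xs ++ [y]) = ascents xs + (if xs.getLast hx < y then 1 else 0) := by
  induction xs with
  | nil => simp at hx
  | cons a s ih =>
    cases s with
    | nil =>
      simp only [ascents, List.singleton_append, List.tail_cons, List.zip_cons_cons,
        List.zip_nil_left, List.filter_cons, List.filter_nil, List.getLast_singleton]
      by_cases hay : a < y <;> simp [hay]
    | cons b t =>
      have h1 : (a :: b :: t) ++ [y] = a :: b :: (t ++ [y]) := by simp
      rw [h1, ascents_cons₂, show b :: (t ++ [y]) = (b :: t) ++ [y] by simp,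
        ih (by simp), ascents_cons₂]
      rw [List.getLast_cons (List.cons_ne_nil b t)]
      split_ifs <;> omega

lemma mem_le_foldr_max (t : List ℕ) (x : ℕ) (hx : x ∈ t) : x ≤ t.foldr max 0 := by
  induction t with
  | nil => simp at hx
  | cons a s ih =>
    rcases List.mem_cons.1 hx with h | h
    · simp [h]
    · exact le_trans (ih h) (by simp)

lemma foldr_max_append (xs : List ℕ) (y : ℕ) :
    (xs ++ [y]).foldr max 0 = max (xs.foldr max 0) y := by
  induction xs with
  | nil => simp
  | cons a s ih => simp [ih, Nat.max_assoc]

lemma mem_take_index (l : List ℕ) (k x : ℕ) (hx : x ∈ l.take k) :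
    ∃ i, i < k ∧ l.getD i 0 = x := by
  obtain ⟨i, hi, hget⟩ := List.mem_iff_getElem.1 hx
  have hik : i < k := lt_of_lt_of_le hi (by simp [List.length_take_le k l])
  have hil : i < l.length := lt_of_lt_of_le hi (by simp)
  rw [List.getElem_take] at hget
  exact ⟨i, hik, by rw [List.getD_eq_getElem l 0 hil]; exact hget⟩

lemma key_invariant (l : List ℕ) (h0 : l.getD 0 0 = 0)
    (h : ∀ k, k < l.length → 0 < k →
      l.getD k 0 ≤ l.getD (k - 1) 0 ∨ l.getD k 0 = ascents (l.take k) + 1) :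
    ∀ k, 1 ≤ k → k ≤ l.length →
      ascents (l.take k) = (l.take k).foldr max 0 ∧
      ∀ v, v ≤ (l.take k).foldr max 0 → v ∈ l.take k := by
  intro k
  induction k with
  | zero => omega
  | succ k ih =>
    intro _ hk1
    rcases Nat.eq_zero_or_pos k with rfl | hkpos
    · -- base case: take 1
      have hl : 0 < l.length := hk1
      have ht : l.take 1 = [0] := by
        cases l with
        | nil => simp at hl
        | cons x t => simp_all
      rw [ht]
      refine ⟨by simp [ascents], fun v hv => ?_⟩
      simp at hv ⊢
      omega
    · have hkl : k < l.length := hk1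
      obtain ⟨ihe, ihm⟩ := ih hkpos (le_of_lt hkl)
      set L := l.take k with hL
      set M := L.foldr max 0 with hM
      have hlen : L.length = k := List.length_take_of_le (le_of_lt hkl)
      have hne : L ≠ [] := by
        intro hE; rw [hE] at hlen; simp at hlen; omega
      have hts : l.take (k + 1) = L ++ [l.getD k 0] := by
        rw [hL, List.take_succ, List.getElem?_eq_getElem hkl,
          List.getD_eq_getElem l 0 hkl]
        simp
      have hlast : L.getLast hne = l.getD (k - 1) 0 := by
        have h1 : k - 1 < l.length := by omega
        rw [List.getLast_eq_getElem, List.getElem_take]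
        simp only [hlen]
        exact (List.getD_eq_getElem l 0 h1).symm
      have hprevmem : l.getD (k - 1) 0 ∈ L := by
        rw [← hlast]; exact List.getLast_mem hne
      have hprevle : l.getD (k - 1) 0 ≤ M := mem_le_foldr_max _ _ hprevmem
      rcases h k hkl hkpos with hle | heq
      · -- a ≤ previous entry
        have hnolt : ¬ L.getLast hne < l.getD k 0 := by rw [hlast]; omega
        have hamax : max M (l.getD k 0) = M := by omega
        rw [hts, ascents_append _ _ hne, foldr_max_append, if_neg hnolt, hamax]
        exact ⟨by omega, fun v hv => List.mem_append_left _ (ihm v hv)⟩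
      · -- a = ascents + 1 = M + 1
        rw [← hL] at heq
        have ha : l.getD k 0 = M + 1 := by omega
        have hlt : L.getLast hne < l.getD k 0 := by rw [hlast]; omega
        have hamax : max M (l.getD k 0) = M + 1 := by omega
        rw [hts, ascents_append _ _ hne, foldr_max_append, if_pos hlt, hamax]
        refine ⟨by omega, fun v hv => ?_⟩
        rcases Nat.lt_or_ge v (M + 1) with hvM | hvM
        · exact List.mem_append_left _ (ihm v (by omega))
        · have : v = l.getD k 0 := by omega
          rw [this]; exact List.mem_append_right _ (by simp)

theorem selfModified_isRGF (l : List ℕ) (h0 : l.getD 0 0 = 0)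
    (h : ∀ k, k < l.length → 0 < k →
      l.getD k 0 ≤ l.getD (k - 1) 0 ∨ l.getD k 0 = ascents (l.take k) + 1) :
    IsRGF l := by
  refine ⟨h0, fun k hk j hj => ?_⟩
  have hk0 : 0 < k := by
    rcases Nat.eq_zero_or_pos k with rfl | h' 
    · rw [h0] at hj; omega
    · exact h'
  obtain ⟨heq, hmem⟩ := key_invariant l h0 h k hk0 (le_of_lt hk)
  set M := (l.take k).foldr max 0 with hM
  rcases h k hk hk0 with hle | heqa
  · have h1 : k - 1 < l.length := by omega
    have hlt : k - 1 < (l.take k).length := by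
      rw [List.length_take_of_le (le_of_lt hk)]; omega
    have e : (l.take k)[k-1]'hlt = l.getD (k-1) 0 := by
      rw [List.getElem_take]
      exact (List.getD_eq_getElem l 0 h1).symm
    have hprev : l.getD (k-1) 0 ∈ l.take k := e ▸ List.getElem_mem hlt
    have hpM : l.getD (k-1) 0 ≤ M := mem_le_foldr_max _ _ hprev
    exact mem_take_index l k j (hmem j (by omega))
  · have : j = M := by omega
    exact mem_take_index l k j (hmem j (by omega))
end

section
/- An ascent sequence a avoids the pattern 101 if and only if it avoids the pattern 0101. -/
/-!
An ascent sequence avoiding 101 takes exactly the values `0, …, asc`, where `asc` is its number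
of ascents: an ascent `y < x` must create the new value `asc + 1`, since an old value `x` at
position `p` would give the occurrence `x y x` of 101. Now take an occurrence `a_i a_j a_k` of
101 with `i` minimal. The prefix before `i` avoids 101 and `a_j < a_i ≤ asc + 1`, so `a_j`
already occurs at some `p < i`, and `a_p a_i a_j a_k` is an occurrence of 0101. The converse is
immediate.
-/

theorem List.getD_take_of_lt {α : Type*} {l : List α} {n p : ℕ} (d : α) (hp : p < n) :
    (l.take n).getD p d = l.getD p d := by
  simp [List.getElem?_take_of_lt hp]

theorem ascents_singleton (a : ℕ) : ascents [a] = 0 := rfl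

theorem ascents_cons_cons (a b : ℕ) (t : List ℕ) :
    ascents (a :: b :: t) = ascents (b :: t) + if a < b then 1 else 0 := by
  simp only [ascents, List.tail_cons, List.zip_cons_cons, List.filter_cons, decide_eq_true_eq]
  split <;> simp

theorem ascents_append_pair (l : List ℕ) (y x : ℕ) :
    ascents (l ++ [y, x]) = ascents (l ++ [y]) + if y < x then 1 else 0 := by
  induction l with
  | nil => simp only [List.nil_append, ascents_cons_cons, ascents_singleton]
  | cons a l ih =>
    cases l with
    | nil =>
      simp only [List.cons_append, List.nil_append, ascents_cons_cons, ascents_singleton]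
      omega
    | cons b l => simp_all only [List.cons_append, ascents_cons_cons]; omega

theorem IsAscSeq.of_append {l l' : List ℕ} (h : IsAscSeq (l ++ l')) : IsAscSeq l := by
  refine ⟨?_, fun k hk hk0 => ?_⟩
  · cases l with
    | nil => rfl
    | cons a t => exact h.1
  · have := h.2 k (by simp; omega) hk0
    rwa [List.getD_append _ _ _ _ hk, List.take_append_of_le_length hk.le] at this

theorem IsAscSeq.take {l : List ℕ} (h : IsAscSeq l) (n : ℕ) : IsAscSeq (l.take n) := by
  rw [← List.take_append_drop n l] at h
  exact h.of_append

theorem IsAscSeq.le_ascents_add_one_of_append {l : List ℕ} {x : ℕ} (h : IsAscSeq (l ++ [x]))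
    (hl : l ≠ []) : x ≤ ascents l + 1 := by
  have := h.2 l.length (by simp) (List.length_pos_of_ne_nil hl)
  rwa [List.take_left, List.getD_append_right _ _ _ _ le_rfl, Nat.sub_self] at this

theorem Contains101.append {l : List ℕ} (h : Contains101 l) (l' : List ℕ) :
    Contains101 (l ++ l') := by
  obtain ⟨i, j, k, hij, hjk, hk, hik, hjk'⟩ := h
  refine ⟨i, j, k, hij, hjk, by simp; omega, ?_, ?_⟩ <;>
    simpa only [List.getD_append _ _ _ _ (by omega : i < l.length),
      List.getD_append _ _ _ _ (by omega : j < l.length), List.getD_append _ _ _ _ hk]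

theorem contains101_append_pair {l : List ℕ} {y x : ℕ} (hx : x ∈ l) (hyx : y < x) :
    Contains101 (l ++ [y, x]) := by
  obtain ⟨p, hp, rfl⟩ := List.mem_iff_getElem.1 hx
  refine ⟨p, l.length, l.length + 1, hp, by omega, by simp, ?_, ?_⟩ <;>
    simp [List.getElem?_append_left hp, List.getElem?_eq_getElem hp, hyx]

theorem IsAscSeq.mem_iff_le_ascents {l : List ℕ} (h : IsAscSeq l) (h101 : ¬ Contains101 l)
    (hl : l ≠ []) (v : ℕ) : v ∈ l ↔ v ≤ ascents l := by
  induction l using List.reverseRecOn generalizing v with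
  | nil => exact absurd rfl hl
  | append_singleton l x ih =>
    obtain rfl | ⟨l, y, rfl⟩ := l.eq_nil_or_concat
    · have hx : x = 0 := h.1
      simp [hx, ascents_singleton]
    rw [List.concat_eq_append] at *
    have ih := ih h.of_append (fun c => h101 (c.append [x])) (by simp)
    have hy : y ≤ ascents (l ++ [y]) := (ih y).1 (by simp)
    have hx := h.le_ascents_add_one_of_append (by simp)
    rw [List.mem_append, ih, List.mem_singleton, List.append_assoc, List.singleton_append,
      ascents_append_pair]
    split_ifs with hyx
    · have hx' : x = ascents (l ++ [y]) + 1 := by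
        by_contra hne
        have hxl : x ∈ l := by
          simpa [hyx.ne'] using (ih x).2 (by omega)
        exact h101 (by simpa using contains101_append_pair hxl hyx)
      omega
    · omega

theorem Contains0101.contains101 {l : List ℕ} (h : Contains0101 l) : Contains101 l := by
  obtain ⟨i, j, k, m, -, hjk, hkm, hm, hik, hjm, hij⟩ := h
  exact ⟨j, k, m, hjk, hkm, hm, hjm, by omega⟩

theorem Contains101.exists_not_contains101_take {l : List ℕ} (h : Contains101 l) :
    ∃ i j k, i < j ∧ j < k ∧ k < l.length ∧ l.getD i 0 = l.getD k 0 ∧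
      l.getD j 0 < l.getD k 0 ∧ ¬ Contains101 (l.take i) := by
  classical
  obtain ⟨j, k, hij, hjk, hk, hik, hjk'⟩ := Nat.find_spec h
  refine ⟨Nat.find h, j, k, hij, hjk, hk, hik, hjk', ?_⟩
  rintro ⟨p, q, r, hpq, hqr, hr, hpr, hqr'⟩
  simp only [List.length_take, lt_min_iff] at hr
  simp only [List.getD_take_of_lt _ hr.1, List.getD_take_of_lt _ (hqr.trans hr.1),
    List.getD_take_of_lt _ ((hpq.trans hqr).trans hr.1)] at hpr hqr'
  exact Nat.find_min h (by omega) ⟨q, r, hpq, hqr, hr.2, hpr, hqr'⟩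

theorem IsAscSeq.contains0101_of_contains101 {l : List ℕ} (h : IsAscSeq l)
    (h101 : Contains101 l) : Contains0101 l := by
  obtain ⟨i, j, k, hij, hjk, hk, hik, hjk', hpre⟩ := h101.exists_not_contains101_take
  have hi : 0 < i := Nat.pos_of_ne_zero fun hi0 => by
    subst hi0
    have := h.1
    omega
  have hai : l.getD i 0 ≤ ascents (l.take i) + 1 := h.2 i (by omega) hi
  have hmem : l.getD j 0 ∈ l.take i :=
    ((h.take i).mem_iff_le_ascents hpre (List.ne_nil_of_length_pos (by simp; omega)) _).2
      (by omega)
  obtain ⟨p, hp, hpj⟩ := List.mem_iff_getElem.1 hmem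
  rw [List.length_take, lt_min_iff] at hp
  rw [← List.getD_eq_getElem _ 0, List.getD_take_of_lt _ hp.1] at hpj
  exact ⟨p, i, j, k, hp.1, hij, hjk, hk, hpj, hik, by omega⟩

theorem avoids101_iff_avoids0101 (l : List ℕ) (h : IsAscSeq l) :
    ¬ Contains101 l ↔ ¬ Contains0101 l :=
  not_congr ⟨h.contains0101_of_contains101, Contains0101.contains101⟩
end

section
/- For any finite sequence a of real numbers, the panorama sequence pan(a) is a restricted growth function. -/
/-! The first entry of the panorama belongs to a maximal entry of `a`, and nothing to the right of
a maximum is higher, so its view is `0`. If position `i` has view `n + 1`, the first position `j`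
to its right with a higher entry has view `n`; being higher, `j` is listed before `i` in the
panorama. -/

lemma isRGF_map_of_pairwise {ι β : Type*} [LinearOrder β] (g : ι → β) (f : ι → ℕ) {L : List ι}
    (hL : L.Pairwise fun x y => g y ≤ g x)
    (hmax : ∀ x ∈ L, (∀ y ∈ L, g y ≤ g x) → f x = 0)
    (hstep : ∀ x ∈ L, ∀ n, f x = n + 1 → ∃ y ∈ L, g x < g y ∧ f y = n) :
    IsRGF (L.map f) := by
  constructor
  · cases L with
    | nil => rfl
    | cons x L =>
      rw [List.pairwise_cons] at hL
      refine hmax x List.mem_cons_self ?_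
      simpa using hL.1
  · intro k hk n hn
    rw [List.length_map] at hk
    rw [List.getD_eq_getElem _ _ (by simpa), List.getElem_map] at hn
    obtain ⟨y, hyL, hlt, hfy⟩ := hstep _ (L.getElem_mem hk) n hn
    obtain ⟨m, hm, rfl⟩ := List.getElem_of_mem hyL
    have hmk : m < k := by
      by_contra! hkm
      rcases hkm.eq_or_lt with rfl | hkm
      · exact lt_irrefl _ hlt
      · exact not_le.mpr hlt (List.pairwise_iff_getElem.mp hL k m hk hm hkm)
    exact ⟨m, hmk, by rw [List.getD_eq_getElem _ _ (by simpa), List.getElem_map, hfy]⟩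

section View

variable {α : Type*} [LinearOrder α] [Inhabited α]

abbrev IsVisibleFrom (a : List α) (i j : ℕ) : Prop :=
  i < j ∧ ∀ k, k < j → i ≤ k → a.getD k default < a.getD j default

lemma view_eq_card_filter (a : List α) (i : ℕ) :
    view a i = ((Finset.range a.length).filter (IsVisibleFrom a i)).card := by
  rw [view, ← List.toFinset_card_of_nodup (List.nodup_range.filter _)]
  congr 1
  ext j
  simp

lemma view_eq_zero_of_forall_le (a : List α) {i : ℕ}
    (hi : ∀ j < a.length, a.getD j default ≤ a.getD i default) : view a i = 0 := by
  rw [view_eq_card_filter, Finset.card_eq_zero, Finset.filter_eq_empty_iff]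
  exact fun j hj hvis => not_lt.mpr (hi j (Finset.mem_range.mp hj)) (hvis.2 i hvis.1 le_rfl)

lemma isVisibleFrom_iff_of_isLeast (a : List α) {i j₀ : ℕ}
    (hj₀ : IsLeast {j | IsVisibleFrom a i j} j₀) (j : ℕ) :
    IsVisibleFrom a i j ↔ j = j₀ ∨ IsVisibleFrom a j₀ j := by
  obtain ⟨⟨hij₀, hj₀max⟩, hmin⟩ := hj₀
  constructor
  · intro hj
    rcases lt_trichotomy j j₀ with hlt | rfl | hgt
    · exact absurd (hmin hj) (not_le.mpr hlt)
    · exact Or.inl rfl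
    · exact Or.inr ⟨hgt, fun k hkj hj₀k => hj.2 k hkj (by omega)⟩
  · rintro (rfl | ⟨hj₀j, hjmax⟩)
    · exact ⟨hij₀, hj₀max⟩
    · refine ⟨hij₀.trans hj₀j, fun k hkj hik => ?_⟩
      rcases lt_or_ge k j₀ with hkj₀ | hj₀k
      · exact (hj₀max k hkj₀ hik).trans (hjmax j₀ hj₀j le_rfl)
      · exact hjmax k hkj hj₀k

lemma view_eq_view_add_one_of_isLeast (a : List α) {i j₀ : ℕ}
    (hj₀ : IsLeast {j | IsVisibleFrom a i j} j₀) (hj₀len : j₀ < a.length) :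
    view a i = view a j₀ + 1 := by
  have hj₀not : ¬ IsVisibleFrom a j₀ j₀ := fun h => lt_irrefl _ h.1
  rw [view_eq_card_filter, view_eq_card_filter,
    Finset.filter_congr fun j _ => isVisibleFrom_iff_of_isLeast a hj₀ j, Finset.filter_or,
    Finset.filter_eq' _ j₀, if_pos (Finset.mem_range.mpr hj₀len), Finset.singleton_union,
    Finset.card_insert_of_notMem (by simp [hj₀not])]

lemma exists_lt_view_eq_of_view_eq_succ (a : List α) {i n : ℕ} (h : view a i = n + 1) :
    ∃ j < a.length, a.getD i default < a.getD j default ∧ view a j = n := by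
  have hpos : 0 < ((Finset.range a.length).filter (IsVisibleFrom a i)).card := by
    rw [← view_eq_card_filter, h]
    exact n.succ_pos
  obtain ⟨j, hj⟩ := Finset.card_pos.mp hpos
  rw [Finset.mem_filter, Finset.mem_range] at hj
  have hex : ∃ j, IsVisibleFrom a i j := ⟨j, hj.2⟩
  have hleast : IsLeast {j | IsVisibleFrom a i j} (Nat.find hex) :=
    ⟨Nat.find_spec hex, fun _ hk => Nat.find_min' hex hk⟩
  have hlen : Nat.find hex < a.length := (Nat.find_min' hex hj.2).trans_lt hj.1
  refine ⟨Nat.find hex, hlen, (Nat.find_spec hex).2 i (Nat.find_spec hex).1 le_rfl, ?_⟩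
  have := view_eq_view_add_one_of_isLeast a hleast hlen
  omega

end View

section PanOrder

variable {α : Type*} [LinearOrder α] [Inhabited α]

def panOrder (a : List α) : List ℕ :=
  (List.range a.length).mergeSort fun i j =>
    decide (a.getD j default < a.getD i default ∨ (a.getD i default = a.getD j default ∧ i ≤ j))

lemma pan_eq_map_panOrder (a : List α) : pan a = (panOrder a).map (view a) := rfl

lemma mem_panOrder {a : List α} {i : ℕ} : i ∈ panOrder a ↔ i < a.length := by
  rw [panOrder, List.mem_mergeSort, List.mem_range]

lemma pairwise_panOrder (a : List α) :
    (panOrder a).Pairwise fun i j => a.getD j default ≤ a.getD i default := by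
  refine (List.pairwise_mergeSort ?_ ?_ _).imp ?_
  · intro i j k
    simp only [decide_eq_true_eq]
    grind
  · intro i j
    simp only [Bool.or_eq_true, decide_eq_true_eq]
    grind
  · intro i j
    simp only [decide_eq_true_eq]
    rintro (h | ⟨h, -⟩)
    · exact h.le
    · exact h.ge

end PanOrder

theorem pan_isRGF (a : List ℝ) : IsRGF (pan a) := by
  rw [pan_eq_map_panOrder]
  refine isRGF_map_of_pairwise (fun i => a.getD i default) (view a) (pairwise_panOrder a) ?_ ?_
  · intro i _ himax
    exact view_eq_zero_of_forall_le a fun j hj => himax j (mem_panOrder.mpr hj)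
  · intro i _ n hn
    obtain ⟨j, hj, hlt, hview⟩ := exists_lt_view_eq_of_view_eq_succ a hn
    exact ⟨j, mem_panOrder.mpr hj, hlt, hview⟩
end

section
/- Let a = (a_1,...,a_n) be an ascent sequence and M = f_AM(a) the corresponding Fishburn matrix. Then M has a zero entry on its diagonal if and only if there exists an index i ∈ [1, n-1] with a_i < a_{i+1} ≤ asc(a_1,...,a_i). -/
lemma zip_tail_concat : ∀ (q : List ℕ), q ≠ [] → ∀ x,
    (q ++ [x]).zip (q ++ [x]).tail = q.zip q.tail ++ [(q.getLastD 0, x)]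
  | [], h, x => absurd rfl h
  | [a], _, x => rfl
  | (a :: b :: t), _, x => by
    have ih := zip_tail_concat (b :: t) (by simp) x
    simp only [List.cons_append, List.zip_cons_cons, List.tail_cons] at ih ⊢
    rw [ih]
    rfl

lemma ascents_concat (q : List ℕ) (hq : q ≠ []) (x : ℕ) :
    ascents (q ++ [x]) = ascents q + if q.getLastD 0 < x then 1 else 0 := by
  unfold ascents
  rw [zip_tail_concat q hq x, List.filter_append, List.length_append]
  by_cases h : q.getLast?.getD 0 < x <;>
    simp [List.filter, h, List.getLastD_eq_getLast?]

lemma getLastD_eq_getD : ∀ (q : List ℕ), q ≠ [] → q.getLastD 0 = q.getD (q.length - 1) 0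
  | [], h => absurd rfl h
  | [a], _ => rfl
  | (a :: b :: t), _ => by
    have ih := getLastD_eq_getD (b :: t) (by simp)
    simp only [List.getLastD_cons] at ih ⊢
    rw [ih]
    simp [List.getD]

lemma isAscSeq_of_concat (q : List ℕ) (x : ℕ) (hq : q ≠ [])
    (h : IsAscSeq (q ++ [x])) : IsAscSeq q ∧ x ≤ ascents q + 1 := by
  obtain ⟨h0, h1⟩ := h
  have hql : 0 < q.length := List.length_pos_iff.mpr hq
  refine ⟨⟨?_, ?_⟩, ?_⟩
  · have he := List.getD_append q [x] 0 0 hql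
    rw [← he]; exact h0
  · intro k hk hk0
    have := h1 k (by simp; omega) hk0
    rwa [List.getD_append _ _ _ _ (by omega),
      List.take_append_of_le_length (by omega)] at this
  · have := h1 q.length (by simp) hql
    rwa [List.getD_append_right _ _ _ _ le_rfl, Nat.sub_self,
      List.take_append_of_le_length le_rfl, List.take_length] at this

def Cond (p : List ℕ) : Prop :=
  ∃ k, k + 1 < p.length ∧ p.getD k 0 < p.getD (k + 1) 0 ∧
    p.getD (k + 1) 0 ≤ ascents (p.take (k + 1))

lemma cond_concat (q : List ℕ) (hq : q ≠ []) (x : ℕ) :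
    Cond (q ++ [x]) ↔ Cond q ∨ (q.getLastD 0 < x ∧ x ≤ ascents q) := by
  have hql : 0 < q.length := List.length_pos_iff.mpr hq
  constructor
  · rintro ⟨k, hk, h1, h2⟩
    rw [List.length_append, List.length_singleton] at hk
    rcases lt_or_eq_of_le (Nat.lt_succ_iff.mp hk) with hk' | hk'
    · left
      refine ⟨k, hk', ?_, ?_⟩
      · rwa [List.getD_append _ _ _ _ (by omega), List.getD_append _ _ _ _ hk'] at h1
      · rwa [List.getD_append _ _ _ _ hk',
          List.take_append_of_le_length (by omega)] at h2
    · right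
      rw [hk', List.getD_append_right _ _ _ _ le_rfl, Nat.sub_self] at h1 h2
      rw [List.getD_append _ _ _ _ (by omega)] at h1
      rw [List.take_append_of_le_length le_rfl, List.take_length] at h2
      have hx : ([x] : List ℕ).getD 0 0 = x := rfl
      rw [hx] at h1 h2
      rw [getLastD_eq_getD q hq, show q.length - 1 = k by omega]
      exact ⟨h1, h2⟩
  · rintro (⟨k, hk, h1, h2⟩ | ⟨h1, h2⟩)
    · refine ⟨k, by simp; omega, ?_, ?_⟩
      · rwa [List.getD_append _ _ _ _ (by omega), List.getD_append _ _ _ _ (by omega)]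
      · rwa [List.getD_append _ _ _ _ (by omega),
          List.take_append_of_le_length (by omega)]
    · refine ⟨q.length - 1, by simp; omega, ?_, ?_⟩
      · rw [List.getD_append _ _ _ _ (by omega), Nat.sub_add_cancel hql,
          List.getD_append_right _ _ _ _ le_rfl, Nat.sub_self]
        rw [getLastD_eq_getD q hq] at h1
        exact h1
      · rw [Nat.sub_add_cancel hql, List.getD_append_right _ _ _ _ le_rfl, Nat.sub_self,
          List.take_append_of_le_length le_rfl, List.take_length]
        exact h2

lemma fAM_concat (q : List ℕ) (hq : q ≠ []) (x : ℕ) :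
    fAM (q ++ [x]) = fStep (fAM q) x := by
  obtain ⟨a, t, rfl⟩ := List.exists_cons_of_ne_nil hq
  simp [fAM, List.foldl_append]

lemma mindex_eq (M : FMat) (m : ℕ) (h1 : M.entry m (M.d - 1) ≠ 0)
    (h0 : ∀ i, i < m → M.entry i (M.d - 1) = 0) : mindex M = m := by
  have hmem : m ∈ {i | M.entry i (M.d - 1) ≠ 0} := h1
  have h2 := Nat.sInf_mem (⟨m, hmem⟩ : Set.Nonempty _)
  have h3 := Nat.sInf_le hmem
  rcases lt_or_eq_of_le h3 with hlt | heq
  · exact absurd (h0 _ hlt) h2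
  · exact heq

lemma master : ∀ (p : List ℕ), IsAscSeq p → p ≠ [] →
    (fAM p).d = ascents p + 1 ∧
    p.getLastD 0 ≤ ascents p ∧
    (∀ i, i < p.getLastD 0 → (fAM p).entry i ((fAM p).d - 1) = 0) ∧
    (fAM p).entry (p.getLastD 0) ((fAM p).d - 1) ≠ 0 ∧
    ((∃ i, i < (fAM p).d ∧ (fAM p).entry i i = 0) ↔ Cond p) := by
  intro p
  induction p using List.reverseRecOn with
  | nil => intro _ h; exact absurd rfl h
  | append_singleton q x ih =>
    intro h _
    rcases eq_or_ne q [] with rfl | hq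
    · -- base case p = [x] with x = 0
      simp only [List.nil_append] at h ⊢
      have hx : x = 0 := by simpa using h.1
      subst hx
      refine ⟨by simp [fAM, ascents], by simp [ascents], ?_, by simp [fAM], ?_⟩
      · intro i hi
        simp [List.getLastD] at hi
      constructor
      · rintro ⟨i, hi, hz⟩
        simp [fAM] at hi hz
        omega
      · rintro ⟨k, hk, -⟩
        simp at hk
    · -- inductive step
      obtain ⟨hq1, hx⟩ := isAscSeq_of_concat q x hq h
      obtain ⟨hd, hle, hcol0, hcolne, hiff⟩ := ih hq1 hq
      set M := fAM q with hM
      set L := q.getLastD 0 with hL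
      have hmind : mindex M = L := mindex_eq M L hcolne hcol0
      have hfa : fAM (q ++ [x]) = fStep M x := fAM_concat q hq x
      rw [hfa, List.getLastD_concat]
      by_cases c1 : x ≤ mindex M
      · -- AM1
        have hxL : x ≤ L := by rwa [hmind] at c1
        have hasc : ascents (q ++ [x]) = ascents q := by
          rw [ascents_concat q hq x, if_neg (by omega)]
          omega
        have hstep : fStep M x = ⟨M.d, fun i j =>
            M.entry i j + if i = x ∧ j = M.d - 1 then 1 else 0⟩ := by
          rw [fStep, if_pos c1]
        rw [hstep]
        dsimp only
        refine ⟨by omega, by omega, ?_, ?_, ?_⟩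
        · intro i hi
          split_ifs with hc
          · omega
          · have := hcol0 i (by omega)
            omega
        · split_ifs with hc
          · omega
          · exact absurd ⟨rfl, rfl⟩ hc
        · rw [cond_concat q hq x, ← hiff]
          constructor
          · rintro ⟨i, hi, hz⟩
            split_ifs at hz with hc
            all_goals exact Or.inl ⟨i, hi, by omega⟩
          · rintro (⟨i, hi, hz⟩ | hc)
            · refine ⟨i, hi, ?_⟩
              split_ifs with hc
              · obtain ⟨h1, h2⟩ := hc
                have hLi : L = i := by omega
                rw [hLi, ← h2] at hcolne
                exact absurd hz hcolne
              · omega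
            · exact absurd hc (by omega)
      · -- not AM1
        rw [hmind] at c1
        have hLx : L < x := by omega
        have hasc : ascents (q ++ [x]) = ascents q + 1 := by
          rw [ascents_concat q hq x, if_pos hLx]
        by_cases c2 : x = M.d
        · -- AM2
          have hstep : fStep M x = ⟨M.d + 1, fun i j =>
              if i = M.d ∨ j = M.d then (if i = M.d ∧ j = M.d then 1 else 0)
              else M.entry i j⟩ := by
            rw [fStep, if_neg (by omega), if_pos c2]
          rw [hstep]
          dsimp only
          refine ⟨by omega, by omega, ?_, ?_, ?_⟩
          · intro i hi
            split_ifs <;> omega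
          · split_ifs <;> omega
          · rw [cond_concat q hq x, ← hiff]
            constructor
            · rintro ⟨i, hi, hz⟩
              split_ifs at hz with h1 h2
              all_goals first
                | omega
                | exact Or.inl ⟨i, by omega, by omega⟩
            · rintro (⟨i, hi, hz⟩ | hc)
              · refine ⟨i, by omega, ?_⟩
                split_ifs with h1 h2 <;> omega
              · exact absurd hc (by omega)
        · -- AM3
          have hxd : x < M.d := by omega
          have hstep : fStep M x = ⟨M.d + 1, fun i j =>
              if i = x then (if j = M.d then 1 else 0)
              else if j = x then (if i < x then M.entry i (M.d - 1) else 0)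
              else if j = M.d ∧ i < x then 0
              else M.entry (if i < x then i else i - 1)
                (if j < x then j else j - 1)⟩ := by
            rw [fStep, if_neg (by omega), if_neg c2]
          rw [hstep]
          dsimp only
          refine ⟨by omega, by omega, ?_, ?_, ?_⟩
          · intro i hi
            split_ifs <;> omega
          · split_ifs <;> omega
          · rw [cond_concat q hq x]
            constructor
            · intro _
              exact Or.inr ⟨hLx, by omega⟩
            · intro _
              refine ⟨x, by omega, ?_⟩
              split_ifs <;> omega

theorem diag_zero_iff (l : List ℕ) (h : IsAscSeq l) (hne : l ≠ []) :
    (∃ i, i < (fAM l).d ∧ (fAM l).entry i i = 0) ↔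
    (∃ i, i + 1 < l.length ∧ l.getD i 0 < l.getD (i + 1) 0 ∧
      l.getD (i + 1) 0 ≤ ascents (l.take (i + 1))) := by
  exact (master l h hne).2.2.2.2
end
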